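/- arXiv:2305.00664 — 2 statements merged into one kernel-verified Lean document; each statement's English description precedes it below -/
import Mathlib

section
/- Let (X, d) be a metric space, R, ρ ≥ 0, h : X → ℝ an R-Lipschitz classifier, and L : ℝ × ℝ → ℝ a ρ-Lipschitz loss function. Let μ and ν be Borel probability measures on X × ℝ such that (x, y) ↦ L(h(x), y) is integrable with respect to both μ and ν, and let γ be any coupling of μ and ν. Then |ε_μ(h) − ε_ν(h)| ≤ ρ·√(R² + 1) · ∫ d₂((x, y), (x′, y′)) dγ((x, y), (x′, y′)), where the right-hand side is a value in [0, ∞] and the inequality holds trivially if it is infinite. -/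
/-!
Write `f (x, y) = L (h x) y`. Both expected errors are integrals against the coupling `γ`,
of `f ∘ Prod.fst` and `f ∘ Prod.snd`, so their difference is bounded by `∫ |f w.1 - f w.2| dγ`.
Pointwise, the Lipschitz bounds give `|f (x, y) - f (x', y')| ≤ ρ (R d(x, x') + |y - y'|)`, and
Cauchy–Schwarz bounds `R a + b` by `√(R² + 1) · √(a² + b²)`.
-/

open MeasureTheory

theorem mul_add_le_sqrt_mul_sqrt (R a b : ℝ) :
    R * a + b ≤ Real.sqrt (R ^ 2 + 1) * Real.sqrt (a ^ 2 + b ^ 2) := by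
  rw [← Real.sqrt_mul (by positivity)]
  refine (le_abs_self _).trans (Real.abs_le_sqrt ?_)
  nlinarith [sq_nonneg (R * b - a)]

theorem abs_loss_comp_sub_le {X : Type*} [PseudoMetricSpace X] {R ρ : ℝ} (hρ : 0 ≤ ρ)
    {h : X → ℝ} (hLip : ∀ x x' : X, |h x - h x'| ≤ R * dist x x') {L : ℝ → ℝ → ℝ}
    (hL₁ : ∀ a b y : ℝ, |L a y - L b y| ≤ ρ * |a - b|)
    (hL₂ : ∀ a y y' : ℝ, |L a y - L a y'| ≤ ρ * |y - y'|) (x x' : X) (y y' : ℝ) :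
    |L (h x) y - L (h x') y'| ≤
      ρ * Real.sqrt (R ^ 2 + 1) * Real.sqrt (dist x x' ^ 2 + (y - y') ^ 2) :=
  calc |L (h x) y - L (h x') y'|
      ≤ |L (h x) y - L (h x') y| + |L (h x') y - L (h x') y'| := abs_sub_le _ _ _
    _ ≤ ρ * |h x - h x'| + ρ * |y - y'| := add_le_add (hL₁ _ _ _) (hL₂ _ _ _)
    _ ≤ ρ * (R * dist x x' + |y - y'|) := by
        rw [mul_add]; gcongr; exact hLip x x'
    _ ≤ ρ * (Real.sqrt (R ^ 2 + 1) * Real.sqrt (dist x x' ^ 2 + |y - y'| ^ 2)) := by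
        gcongr; exact mul_add_le_sqrt_mul_sqrt _ _ _
    _ = ρ * Real.sqrt (R ^ 2 + 1) * Real.sqrt (dist x x' ^ 2 + (y - y') ^ 2) := by
        rw [sq_abs, mul_assoc]

theorem ofReal_abs_integral_sub_le_lintegral_coupling {α : Type*} [MeasurableSpace α]
    {μ ν : Measure α} {γ : Measure (α × α)} (hγ₁ : γ.map Prod.fst = μ)
    (hγ₂ : γ.map Prod.snd = ν) {f : α → ℝ} (hfμ : Integrable f μ) (hfν : Integrable f ν) :
    ENNReal.ofReal |(∫ z, f z ∂μ) - ∫ z, f z ∂ν| ≤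
      ∫⁻ w, ENNReal.ofReal |f w.1 - f w.2| ∂γ := by
  subst hγ₁ hγ₂
  have hint₁ : Integrable (fun w ↦ f w.1) γ := hfμ.comp_measurable measurable_fst
  have hint₂ : Integrable (fun w ↦ f w.2) γ := hfν.comp_measurable measurable_snd
  rw [integral_map measurable_fst.aemeasurable hfμ.aestronglyMeasurable,
    integral_map measurable_snd.aemeasurable hfν.aestronglyMeasurable,
    ← integral_sub hint₁ hint₂, ← Real.enorm_eq_ofReal_abs]
  simpa only [Real.enorm_eq_ofReal_abs] using enorm_integral_le_lintegral_enorm (fun w : α × α ↦ f w.1 - f w.2)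

theorem error_diff_le_coupling_cost_general {X : Type*} [MetricSpace X]
    [MeasurableSpace X] (R ρ : ℝ) (hρ : 0 ≤ ρ)
    (h : X → ℝ) (hLip : ∀ x x' : X, |h x - h x'| ≤ R * dist x x')
    (L : ℝ → ℝ → ℝ)
    (hL₁ : ∀ a b y : ℝ, |L a y - L b y| ≤ ρ * |a - b|)
    (hL₂ : ∀ a y y' : ℝ, |L a y - L a y'| ≤ ρ * |y - y'|)
    (μ ν : Measure (X × ℝ))
    (hμint : Integrable (fun z : X × ℝ => L (h z.1) z.2) μ)
    (hνint : Integrable (fun z : X × ℝ => L (h z.1) z.2) ν)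
    (γ : Measure ((X × ℝ) × (X × ℝ)))
    (hγ₁ : γ.map Prod.fst = μ) (hγ₂ : γ.map Prod.snd = ν) :
    ENNReal.ofReal |(∫ z, L (h z.1) z.2 ∂μ) - ∫ z, L (h z.1) z.2 ∂ν| ≤
      ENNReal.ofReal (ρ * Real.sqrt (R ^ 2 + 1)) *
        ∫⁻ w, ENNReal.ofReal
          (Real.sqrt (dist w.1.1 w.2.1 ^ 2 + (w.1.2 - w.2.2) ^ 2)) ∂γ := by
  calc ENNReal.ofReal |(∫ z, L (h z.1) z.2 ∂μ) - ∫ z, L (h z.1) z.2 ∂ν|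
      ≤ ∫⁻ w, ENNReal.ofReal |L (h w.1.1) w.1.2 - L (h w.2.1) w.2.2| ∂γ :=
        ofReal_abs_integral_sub_le_lintegral_coupling hγ₁ hγ₂ hμint hνint
    _ ≤ ∫⁻ w, ENNReal.ofReal (ρ * Real.sqrt (R ^ 2 + 1)) *
          ENNReal.ofReal (Real.sqrt (dist w.1.1 w.2.1 ^ 2 + (w.1.2 - w.2.2) ^ 2)) ∂γ := by
        refine lintegral_mono fun w ↦ ?_
        rw [← ENNReal.ofReal_mul (by positivity)]
        exact ENNReal.ofReal_le_ofReal (abs_loss_comp_sub_le hρ hLip hL₁ hL₂ _ _ _ _)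
    _ = _ := lintegral_const_mul' _ _ ENNReal.ofReal_ne_top

/-- Let `h : X → ℝ` be an `R`-Lipschitz classifier, `L` a `ρ`-Lipschitz loss, and
`μ, ν` Borel probability measures on `X × ℝ` for which `(x, y) ↦ L (h x) y` is
integrable.  For any coupling `γ` of `μ` and `ν`,
`|ε_μ(h) − ε_ν(h)| ≤ ρ·√(R²+1) · ∫ d₂((x,y),(x',y')) dγ`, where the right-hand
side is a value in `[0, ∞]` (the inequality holding trivially if it is `∞`). -/
theorem error_diff_le_coupling_cost {X : Type*} [MetricSpace X]
    [MeasurableSpace X] [BorelSpace X] (R ρ : ℝ) (hR : 0 ≤ R) (hρ : 0 ≤ ρ)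
    (h : X → ℝ) (hLip : ∀ x x' : X, |h x - h x'| ≤ R * dist x x')
    (L : ℝ → ℝ → ℝ)
    (hL₁ : ∀ a b y : ℝ, |L a y - L b y| ≤ ρ * |a - b|)
    (hL₂ : ∀ a y y' : ℝ, |L a y - L a y'| ≤ ρ * |y - y'|)
    (μ ν : Measure (X × ℝ)) [IsProbabilityMeasure μ] [IsProbabilityMeasure ν]
    (hμint : Integrable (fun z : X × ℝ => L (h z.1) z.2) μ)
    (hνint : Integrable (fun z : X × ℝ => L (h z.1) z.2) ν)
    (γ : Measure ((X × ℝ) × (X × ℝ))) [IsProbabilityMeasure γ]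
    (hγ₁ : γ.map Prod.fst = μ) (hγ₂ : γ.map Prod.snd = ν) :
    ENNReal.ofReal |(∫ z, L (h z.1) z.2 ∂μ) - ∫ z, L (h z.1) z.2 ∂ν| ≤
      ENNReal.ofReal (ρ * Real.sqrt (R ^ 2 + 1)) *
        ∫⁻ w, ENNReal.ofReal
          (Real.sqrt (dist w.1.1 w.2.1 ^ 2 + (w.1.2 - w.2.2) ^ 2)) ∂γ :=
  error_diff_le_coupling_cost_general R ρ hρ h hLip L hL₁ hL₂ μ ν hμint hνint γ hγ₁ hγ₂
end

section
/- (Error difference over shifted domains.) Let (X, d) be a metric space, R, ρ ≥ 0, h : X → ℝ an R-Lipschitz classifier, and L : ℝ × ℝ → ℝ a ρ-Lipschitz loss function. Let μ and ν be Borel probability measures on X × ℝ such that (x, y) ↦ L(h(x), y) is integrable with respect to both μ and ν. Then for every p ≥ 1, |ε_μ(h) − ε_ν(h)| ≤ ρ·√(R² + 1) · W_p(μ, ν), where W_p is the p-Wasserstein distance on X × ℝ with respect to the product metric d₂ (a value in [0, ∞], the inequality holding trivially if it is infinite). -/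
open MeasureTheory

noncomputable def wassersteinDist {Z : Type*} [MeasurableSpace Z]
    (dZ : Z → Z → ℝ) (p : ℝ) (μ ν : Measure Z) : ENNReal :=
  ⨅ (γ : Measure (Z × Z)) (_ : IsProbabilityMeasure γ)
    (_ : γ.map Prod.fst = μ) (_ : γ.map Prod.snd = ν),
      (∫⁻ w, ENNReal.ofReal (dZ w.1 w.2) ^ p ∂γ) ^ (1 / p)

lemma cauchy_pt (R d e : ℝ) (hR : 0 ≤ R) (hd : 0 ≤ d) (he : 0 ≤ e) :
    R * d + e ≤ Real.sqrt (R ^ 2 + 1) * Real.sqrt (d ^ 2 + e ^ 2) := by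
  have hs : Real.sqrt (R ^ 2 + 1) ^ 2 = R ^ 2 + 1 :=
    Real.sq_sqrt (by positivity)
  have ht : Real.sqrt (d ^ 2 + e ^ 2) ^ 2 = d ^ 2 + e ^ 2 :=
    Real.sq_sqrt (by positivity)
  have hs0 : 0 ≤ Real.sqrt (R ^ 2 + 1) := Real.sqrt_nonneg _
  have ht0 : 0 ≤ Real.sqrt (d ^ 2 + e ^ 2) := Real.sqrt_nonneg _
  nlinarith [sq_nonneg (R * e - d), mul_nonneg hs0 ht0, mul_nonneg (mul_nonneg hR hd) he,
    sq_nonneg (Real.sqrt (R ^ 2 + 1) * Real.sqrt (d ^ 2 + e ^ 2) - (R * d + e))]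

/-- Error difference over shifted domains: if `h : X → ℝ` is an `R`-Lipschitz
classifier and `L` a `ρ`-Lipschitz loss, and `μ, ν` are Borel probability
measures on `X × ℝ` making `(x, y) ↦ L (h x) y` integrable, then for every
`p ≥ 1`, `|ε_μ(h) − ε_ν(h)| ≤ ρ·√(R²+1) · W_p(μ, ν)`, where `W_p` is the
`p`-Wasserstein distance with respect to the product metric
`d₂((x,y),(x',y')) = √(d(x,x')² + (y-y')²)` on `X × ℝ`. -/
theorem error_diff_le_wasserstein {X : Type*} [MetricSpace X]
    [MeasurableSpace X] [BorelSpace X] (R ρ : ℝ) (hR : 0 ≤ R) (hρ : 0 ≤ ρ)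
    (h : X → ℝ) (hLip : ∀ x x' : X, |h x - h x'| ≤ R * dist x x')
    (L : ℝ → ℝ → ℝ)
    (hL₁ : ∀ a b y : ℝ, |L a y - L b y| ≤ ρ * |a - b|)
    (hL₂ : ∀ a y y' : ℝ, |L a y - L a y'| ≤ ρ * |y - y'|)
    (μ ν : Measure (X × ℝ)) [IsProbabilityMeasure μ] [IsProbabilityMeasure ν]
    (hμint : Integrable (fun z : X × ℝ => L (h z.1) z.2) μ)
    (hνint : Integrable (fun z : X × ℝ => L (h z.1) z.2) ν)
    (p : ℝ) (hp : 1 ≤ p) :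
    ENNReal.ofReal |(∫ z, L (h z.1) z.2 ∂μ) - ∫ z, L (h z.1) z.2 ∂ν| ≤
      ENNReal.ofReal (ρ * Real.sqrt (R ^ 2 + 1)) *
        wassersteinDist
          (fun z z' : X × ℝ => Real.sqrt (dist z.1 z'.1 ^ 2 + (z.2 - z'.2) ^ 2))
          p μ ν := by
  set c : ℝ := ρ * Real.sqrt (R ^ 2 + 1) with hc
  set f : X × ℝ → ℝ := fun z => L (h z.1) z.2 with hf
  have hp0 : (0:ℝ) < p := by linarith
  -- pointwise Lipschitz bound for f
  have key : ∀ z z' : X × ℝ,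
      |f z - f z'| ≤ c * Real.sqrt (dist z.1 z'.1 ^ 2 + (z.2 - z'.2) ^ 2) := by
    intro z z'
    have h1 : |f z - f z'| ≤ ρ * (R * dist z.1 z'.1) + ρ * |z.2 - z'.2| := by
      calc |f z - f z'| ≤ |L (h z.1) z.2 - L (h z'.1) z.2| +
            |L (h z'.1) z.2 - L (h z'.1) z'.2| := by
              simpa [hf] using abs_sub_le (L (h z.1) z.2) (L (h z'.1) z.2) (L (h z'.1) z'.2)
        _ ≤ ρ * |h z.1 - h z'.1| + ρ * |z.2 - z'.2| :=
              add_le_add (hL₁ _ _ _) (hL₂ _ _ _)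
        _ ≤ ρ * (R * dist z.1 z'.1) + ρ * |z.2 - z'.2| := by
              gcongr
              exact hLip _ _
    have h2 := cauchy_pt R (dist z.1 z'.1) |z.2 - z'.2| hR dist_nonneg (abs_nonneg _)
    calc |f z - f z'| ≤ ρ * (R * dist z.1 z'.1 + |z.2 - z'.2|) := by linarith
      _ ≤ ρ * (Real.sqrt (R ^ 2 + 1) * Real.sqrt (dist z.1 z'.1 ^ 2 + |z.2 - z'.2| ^ 2)) := by
          gcongr
      _ = c * Real.sqrt (dist z.1 z'.1 ^ 2 + (z.2 - z'.2) ^ 2) := by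
          rw [sq_abs]; ring
  have hc0 : 0 ≤ c := by positivity
  -- main estimate for any coupling
  have main : ∀ (γ : Measure ((X × ℝ) × (X × ℝ))), IsProbabilityMeasure γ →
      γ.map Prod.fst = μ → γ.map Prod.snd = ν →
      ENNReal.ofReal |(∫ z, f z ∂μ) - ∫ z, f z ∂ν| ≤
        ENNReal.ofReal c *
          ((∫⁻ w, ENNReal.ofReal
              (Real.sqrt (dist w.1.1 w.2.1 ^ 2 + (w.1.2 - w.2.2) ^ 2)) ^ p ∂γ) ^ (1 / p)) := by
    intro γ hγ h1 h2
    set g : ((X × ℝ) × (X × ℝ)) → ℝ :=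
      fun w => Real.sqrt (dist w.1.1 w.2.1 ^ 2 + (w.1.2 - w.2.2) ^ 2) with hg
    have hint1 : Integrable (fun w : (X × ℝ) × (X × ℝ) => f w.1) γ := by
      rw [← h1] at hμint
      exact (integrable_map_measure hμint.1 measurable_fst.aemeasurable).mp hμint
    have hint2 : Integrable (fun w : (X × ℝ) × (X × ℝ) => f w.2) γ := by
      rw [← h2] at hνint
      exact (integrable_map_measure hνint.1 measurable_snd.aemeasurable).mp hνint
    set G : ((X × ℝ) × (X × ℝ)) → ℝ := fun w => |f w.1 - f w.2| with hG
    have hGint : Integrable G γ := (hint1.sub hint2).abs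
    have hGnn : ∀ w, 0 ≤ G w := fun w => abs_nonneg _
    have e1 : (∫ z, f z ∂μ) = ∫ w, f w.1 ∂γ := by
      rw [← h1]; exact integral_map measurable_fst.aemeasurable (h1 ▸ hμint.1)
    have e2 : (∫ z, f z ∂ν) = ∫ w, f w.2 ∂γ := by
      rw [← h2]; exact integral_map measurable_snd.aemeasurable (h2 ▸ hνint.1)
    have step1 : |(∫ z, f z ∂μ) - ∫ z, f z ∂ν| ≤ ∫ w, G w ∂γ := by
      rw [e1, e2, ← integral_sub hint1 hint2]
      simpa [hG, Real.norm_eq_abs] using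
        norm_integral_le_integral_norm (fun w : (X × ℝ) × (X × ℝ) => f w.1 - f w.2) (μ := γ)
    have step2 : ENNReal.ofReal (∫ w, G w ∂γ) = ∫⁻ w, ENNReal.ofReal (G w) ∂γ :=
      ofReal_integral_eq_lintegral_ofReal hGint (Filter.Eventually.of_forall hGnn)
    -- Jensen: L1 norm ≤ Lp norm for probability measure
    have hpne : (ENNReal.ofReal p) ≠ 0 := by
      simp only [ne_eq, ENNReal.ofReal_eq_zero, not_le]; linarith
    have step3 : (∫⁻ w, ENNReal.ofReal (G w) ∂γ) ≤
        (∫⁻ w, ENNReal.ofReal (G w) ^ p ∂γ) ^ (1 / p) := by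
      have hle : eLpNorm G 1 γ ≤ eLpNorm G (ENNReal.ofReal p) γ :=
        eLpNorm_le_eLpNorm_of_exponent_le
          (by simpa using ENNReal.one_le_ofReal.mpr hp) hGint.1
      have hGnn' : ∀ w, ‖G w‖ₑ = ENNReal.ofReal (G w) := fun w =>
        Real.enorm_eq_ofReal (hGnn w)
      rw [eLpNorm_one_eq_lintegral_enorm,
        eLpNorm_eq_lintegral_rpow_enorm_toReal hpne ENNReal.ofReal_ne_top] at hle
      simp_rw [hGnn', ENNReal.toReal_ofReal hp0.le] at hle
      exact hle
    have step4 : (∫⁻ w, ENNReal.ofReal (G w) ^ p ∂γ) ^ (1 / p) ≤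
        ENNReal.ofReal c *
          ((∫⁻ w, ENNReal.ofReal (g w) ^ p ∂γ) ^ (1 / p)) := by
      have hpt : ∀ w, ENNReal.ofReal (G w) ^ p ≤
          ENNReal.ofReal c ^ p * ENNReal.ofReal (g w) ^ p := by
        intro w
        rw [← ENNReal.mul_rpow_of_nonneg _ _ hp0.le, ← ENNReal.ofReal_mul hc0]
        exact ENNReal.rpow_le_rpow (ENNReal.ofReal_le_ofReal (key w.1 w.2)) hp0.le
      calc (∫⁻ w, ENNReal.ofReal (G w) ^ p ∂γ) ^ (1 / p)
          ≤ (∫⁻ w, ENNReal.ofReal c ^ p * ENNReal.ofReal (g w) ^ p ∂γ) ^ (1 / p) := by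
            gcongr with w
            exact hpt w
        _ = (ENNReal.ofReal c ^ p * ∫⁻ w, ENNReal.ofReal (g w) ^ p ∂γ) ^ (1 / p) := by
            rw [lintegral_const_mul' _ _
              (ENNReal.rpow_ne_top_of_nonneg hp0.le ENNReal.ofReal_ne_top)]
        _ = ENNReal.ofReal c *
            ((∫⁻ w, ENNReal.ofReal (g w) ^ p ∂γ) ^ (1 / p)) := by
            rw [ENNReal.mul_rpow_of_nonneg _ _ (by positivity : (0:ℝ) ≤ 1 / p),
              ← ENNReal.rpow_mul, mul_one_div, div_self hp0.ne', ENNReal.rpow_one]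
    calc ENNReal.ofReal |(∫ z, f z ∂μ) - ∫ z, f z ∂ν|
        ≤ ENNReal.ofReal (∫ w, G w ∂γ) := ENNReal.ofReal_le_ofReal step1
      _ = ∫⁻ w, ENNReal.ofReal (G w) ∂γ := step2
      _ ≤ (∫⁻ w, ENNReal.ofReal (G w) ^ p ∂γ) ^ (1 / p) := step3
      _ ≤ _ := step4
  -- conclude via infimum
  by_cases hczero : c = 0
  · have hρ0 : ρ = 0 := by
      have hs : Real.sqrt (R ^ 2 + 1) ≠ 0 := by positivity
      rcases mul_eq_zero.mp hczero with h' | h'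
      · exact h'
      · exact absurd h' hs
    have hconst : ∀ z : X × ℝ, f z = L 0 0 := by
      intro z
      have h1 : |L (h z.1) z.2 - L 0 z.2| ≤ 0 := by simpa [hρ0] using hL₁ (h z.1) 0 z.2
      have h2 : |L 0 z.2 - L 0 0| ≤ 0 := by simpa [hρ0] using hL₂ 0 z.2 0
      have e1 := abs_nonpos_iff.mp h1
      have e2 := abs_nonpos_iff.mp h2
      simp only [hf]; linarith
    have heq : (∫ z, f z ∂μ) = ∫ z, f z ∂ν := by
      rw [show f = fun _ : X × ℝ => L 0 0 from funext hconst]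
      simp
    rw [heq]
    simp
  · have hcpos : 0 < c := lt_of_le_of_ne hc0 (Ne.symm hczero)
    have hC0 : ENNReal.ofReal c ≠ 0 := by
      simp only [ne_eq, ENNReal.ofReal_eq_zero, not_le]; linarith
    have hCt : ENNReal.ofReal c ≠ ⊤ := ENNReal.ofReal_ne_top
    rw [wassersteinDist]
    have hdiv : ENNReal.ofReal |(∫ z, f z ∂μ) - ∫ z, f z ∂ν| / ENNReal.ofReal c ≤
        ⨅ (γ : Measure ((X × ℝ) × (X × ℝ))) (_ : IsProbabilityMeasure γ)
          (_ : γ.map Prod.fst = μ) (_ : γ.map Prod.snd = ν),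
          (∫⁻ w, ENNReal.ofReal
            (Real.sqrt (dist w.1.1 w.2.1 ^ 2 + (w.1.2 - w.2.2) ^ 2)) ^ p ∂γ) ^ (1 / p) := by
      refine le_iInf fun γ => le_iInf fun hγ => le_iInf fun h1 => le_iInf fun h2 => ?_
      rw [ENNReal.div_le_iff_le_mul (Or.inl hC0) (Or.inl hCt), mul_comm]
      exact main γ hγ h1 h2
    calc ENNReal.ofReal |(∫ z, f z ∂μ) - ∫ z, f z ∂ν|
        = ENNReal.ofReal c *
          (ENNReal.ofReal |(∫ z, f z ∂μ) - ∫ z, f z ∂ν| / ENNReal.ofReal c) :=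
          (ENNReal.mul_div_cancel hC0 hCt).symm
      _ ≤ _ := by gcongr
end
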